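/- arXiv:2205.11502 — 2 statements merged into one kernel-verified Lean document; each statement's English description precedes it below -/
import Mathlib

section
/- Bounded reasoning depth: if V is a finite type with N elements and q is provable from facts F ⊆ V and rules R over V, then q has a proof tree of depth at most N. -/
/-- Provability of a predicate from facts `F` and definite-clause rules `R`. -/
inductive Provable {V : Type*} (F : Set V) (R : Set (Finset V × V)) : V → Prop
  | fact (q : V) : q ∈ F → Provable F R q
  | rule (B : Finset V) (h : V) : (B, h) ∈ R → (∀ b ∈ B, Provable F R b) → Provable F R h

/-- `ProofDepth F R d q` : `q` has a proof tree of depth at most `d`. -/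
def ProofDepth {V : Type*} (F : Set V) (R : Set (Finset V × V)) : ℕ → V → Prop
  | 0, q => q ∈ F
  | d + 1, q => q ∈ F ∨ ∃ B : Finset V, (B, q) ∈ R ∧ ∀ b ∈ B, ProofDepth F R d b

namespace ProofDepthAux

variable {V : Type*} (F : Set V) (R : Set (Finset V × V))

/-- Set of predicates provable at depth `d`. -/
def S (d : ℕ) : Set V := {q | ProofDepth F R d q}

lemma mono_succ : ∀ d, S F R d ⊆ S F R (d + 1) := by
  intro d
  induction d with
  | zero => intro q h; exact Or.inl h
  | succ d ih =>
    intro q h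
    rcases h with h | ⟨B, hB, hall⟩
    · exact Or.inl h
    · exact Or.inr ⟨B, hB, fun b hb => ih (hall b hb)⟩

lemma mono_le {d e : ℕ} (h : d ≤ e) : S F R d ⊆ S F R e := by
  induction e, h using Nat.le_induction with
  | base => exact subset_rfl
  | succ e _ ih => exact ih.trans (mono_succ F R e)

lemma stab_step {d : ℕ} (h : S F R d = S F R (d + 1)) :
    S F R (d + 1) = S F R (d + 2) := by
  apply Set.Subset.antisymm (mono_succ F R (d + 1))
  intro q hq
  rcases hq with hq | ⟨B, hB, hall⟩
  · exact Or.inl hq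
  · exact Or.inr ⟨B, hB, fun b hb => show b ∈ S F R d from h ▸ (hall b hb : b ∈ S F R (d + 1))⟩

lemma stab_all {d : ℕ} (h : S F R d = S F R (d + 1)) :
    ∀ k, S F R (d + k) = S F R (d + k + 1) := by
  intro k
  induction k with
  | zero => exact h
  | succ k ih => exact stab_step F R ih

lemma eq_of_stab {d : ℕ} (h : S F R d = S F R (d + 1)) :
    ∀ k, S F R (d + k) = S F R d := by
  intro k
  induction k with
  | zero => rfl
  | succ k ih => rw [← ih]; exact (stab_all F R h k).symm

/-- Provable implies some finite depth. -/
lemma provable_exists_depth {q : V} (hq : Provable F R q) :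
    ∃ d, ProofDepth F R d q := by
  induction hq with
  | fact q h => exact ⟨0, h⟩
  | rule B h hR hall ih =>
    choose f hf using ih
    refine ⟨B.attach.sup (fun b => f b.1 b.2) + 1,
      Or.inr ⟨B, hR, fun b hb => ?_⟩⟩
    exact mono_le F R (Finset.le_sup (f := fun b => f b.1 b.2)
      (Finset.mem_attach B ⟨b, hb⟩)) (hf b hb)

end ProofDepthAux

theorem provable_proofDepth_card {V : Type*} [Fintype V] (F : Set V)
    (R : Set (Finset V × V)) (q : V) (hq : Provable F R q) :
    ProofDepth F R (Fintype.card V) q := by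
  classical
  set N := Fintype.card V with hN
  obtain ⟨d, hd⟩ := ProofDepthAux.provable_exists_depth F R hq
  -- find a stabilization point e ≤ N
  have hstab : ∃ e ≤ N, ProofDepthAux.S F R e = ProofDepthAux.S F R (e + 1) := by
    by_contra hc
    push_neg at hc
    have hgrow : ∀ e ≤ N + 1, e ≤ (ProofDepthAux.S F R e).ncard := by
      intro e he
      induction e with
      | zero => exact Nat.zero_le _
      | succ e ih =>
        have he' : e ≤ N := Nat.lt_succ_iff.mp he
        have hssub : ProofDepthAux.S F R e ⊂ ProofDepthAux.S F R (e + 1) :=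
          (ProofDepthAux.mono_succ F R e).ssubset_of_ne (hc e he')
        have : (ProofDepthAux.S F R e).ncard < (ProofDepthAux.S F R (e + 1)).ncard :=
          Set.ncard_lt_ncard hssub (Set.toFinite _)
        exact Nat.succ_le_of_lt (lt_of_le_of_lt (ih (le_of_lt (Nat.lt_of_succ_le he))) this)
    have h1 : N + 1 ≤ (ProofDepthAux.S F R (N + 1)).ncard := hgrow (N + 1) le_rfl
    have h2 : (ProofDepthAux.S F R (N + 1)).ncard ≤ N := by
      calc (ProofDepthAux.S F R (N + 1)).ncard ≤ (Set.univ : Set V).ncard :=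
            Set.ncard_le_ncard (Set.subset_univ _) Set.finite_univ
        _ = N := by rw [Set.ncard_univ, Nat.card_eq_fintype_card]
    omega
  obtain ⟨e, heN, heq⟩ := hstab
  rcases le_or_gt d N with hdN | hNd
  · exact ProofDepthAux.mono_le F R hdN hd
  · have hed : e ≤ d := heN.trans hNd.le
    have h1 : ProofDepthAux.S F R d = ProofDepthAux.S F R e := by
      obtain ⟨k, rfl⟩ := Nat.exists_eq_add_of_le hed
      exact ProofDepthAux.eq_of_stab F R heq k
    have h2 : q ∈ ProofDepthAux.S F R e := h1 ▸ hd
    exact ProofDepthAux.mono_le F R heN h2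
end

section
/- The number of rules is an inherent statistical feature: fix a finite set of facts F, a finite pool Ω of rules with |Ω| = n, and a query predicate q. For r < n, among the r-element subsets R ⊆ Ω, let p(r) be the fraction for which q is provable from facts F and rules R. Then p is nondecreasing: p(r) ≤ p(r+1) for every r < n; equivalently, |{R ⊆ Ω : |R| = r, q provable from (F, R)}| · C(n, r+1) ≤ |{R ⊆ Ω : |R| = r+1, q provable from (F, R)}| · C(n, r). -/
theorem Provable.mono {V : Type*} {F : Set V} {R R' : Set (Finset V × V)}
    (hRR : R ⊆ R') {q : V} (h : Provable F R q) : Provable F R' q := by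
  induction h with
  | fact q hq => exact .fact q hq
  | rule B h hB _ ih => exact .rule B h (hRR hB) ih

theorem Provable.monotone_finset_rules {V : Type*} (F : Set V) (q : V) :
    Monotone fun R : Finset (Finset V × V) => Provable F ↑R q :=
  fun _ _ hRR' h => h.mono (Finset.coe_subset.2 hRR')

namespace Finset

theorem card_filter_image_coe {α : Type*} [DecidableEq (Set α)] (𝒜 : Finset (Finset α))
    (p : Set α → Prop) [DecidablePred p] :
    #{S ∈ 𝒜.image ((↑) : Finset α → Set α) | p S} =
      #(𝒜.filter fun A : Finset α => p A) := by
  rw [filter_image, card_image_of_injective _ coe_injective]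

variable {α : Type*} [DecidableEq α] {Ω : Finset α} {P : Finset α → Prop} [DecidablePred P]

theorem card_filter_powersetCard_mul_le (hP : Monotone P) (r : ℕ) :
    #{A ∈ Ω.powersetCard r | P A} * (#Ω - r) ≤ #{B ∈ Ω.powersetCard (r + 1) | P B} * (r + 1) := by
  refine card_mul_le_card_mul (· ⊆ ·) (fun A hA => ?_) (fun B hB => ?_)
  · obtain ⟨hAΩ, hAr⟩ := mem_powersetCard.1 (mem_filter.1 hA).1
    have hinsert : (Ω \ A).image (insert · A) ⊆
        bipartiteAbove (· ⊆ ·) {B ∈ Ω.powersetCard (r + 1) | P B} A := by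
      simp only [image_subset_iff, mem_bipartiteAbove, mem_filter, mem_powersetCard, mem_sdiff]
      exact fun x ⟨hxΩ, hxA⟩ => ⟨⟨⟨insert_subset hxΩ hAΩ, by rw [card_insert_of_notMem hxA, hAr]⟩,
        hP (subset_insert x A) (mem_filter.1 hA).2⟩, subset_insert x A⟩
    calc #Ω - r = #(Ω \ A) := by rw [card_sdiff_of_subset hAΩ, hAr]
      _ = #((Ω \ A).image (insert · A)) :=
        (card_image_of_injOn ((insert_inj_on A).mono (by simp [Set.subset_def]))).symm
      _ ≤ _ := card_le_card hinsert
  · obtain ⟨-, hBr⟩ := mem_powersetCard.1 (mem_filter.1 hB).1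
    have hbelow : bipartiteBelow (· ⊆ ·) {A ∈ Ω.powersetCard r | P A} B ⊆ B.powersetCard r := by
      intro A hA
      simp only [mem_bipartiteBelow, mem_filter, mem_powersetCard] at hA ⊢
      exact ⟨hA.2, hA.1.1.2⟩
    calc _ ≤ #(B.powersetCard r) := card_le_card hbelow
      _ = r + 1 := by rw [card_powersetCard, hBr, Nat.choose_succ_self_right]

theorem card_filter_powersetCard_mul_choose_le (hP : Monotone P) (r : ℕ) :
    #{A ∈ Ω.powersetCard r | P A} * (#Ω).choose (r + 1) ≤
      #{B ∈ Ω.powersetCard (r + 1) | P B} * (#Ω).choose r := by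
  refine Nat.le_of_mul_le_mul_right ?_ r.add_one_pos
  calc #{A ∈ Ω.powersetCard r | P A} * (#Ω).choose (r + 1) * (r + 1)
      = #{A ∈ Ω.powersetCard r | P A} * (#Ω - r) * (#Ω).choose r := by
        rw [mul_assoc, Nat.choose_succ_right_eq]; ring
    _ ≤ #{B ∈ Ω.powersetCard (r + 1) | P B} * (r + 1) * (#Ω).choose r :=
        Nat.mul_le_mul_right _ (card_filter_powersetCard_mul_le hP r)
    _ = _ := by ring

end Finset

open scoped Classical in
theorem num_rules_statistical_feature_general {V : Type*}
    (F : Finset V) (Ω : Finset (Finset V × V)) (q : V)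
    {n : ℕ} (hn : n = Ω.card) :
    ∀ r < n,
      ((Ω.powersetCard r).filter
          (fun R => Provable (↑F : Set V) (↑R : Set (Finset V × V)) q)).card *
          Nat.choose n (r + 1) ≤
        ((Ω.powersetCard (r + 1)).filter
            (fun R => Provable (↑F : Set V) (↑R : Set (Finset V × V)) q)).card *
          Nat.choose n r := by
  intro r _
  subst hn
  -- The coercion `↑R` makes `R` range over `Set`s: each family of rule sets is pushed into
  -- `Finset (Set _)` through the `Finset` monad, i.e. it is the image under `SetLike.coe`.
  simp only [bind_pure_comp, Finset.fmap_def, Finset.card_filter_image_coe]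
  exact Finset.card_filter_powersetCard_mul_choose_le (Provable.monotone_finset_rules _ q) r

open scoped Classical in
theorem num_rules_statistical_feature {V : Type*} [DecidableEq V]
    (F : Finset V) (Ω : Finset (Finset V × V)) (q : V)
    {n : ℕ} (hn : n = Ω.card) :
    ∀ r < n,
      ((Ω.powersetCard r).filter
          (fun R => Provable (↑F : Set V) (↑R : Set (Finset V × V)) q)).card *
          Nat.choose n (r + 1) ≤
        ((Ω.powersetCard (r + 1)).filter
            (fun R => Provable (↑F : Set V) (↑R : Set (Finset V × V)) q)).card *
          Nat.choose n r :=
  num_rules_statistical_feature_general F Ω q hn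
end
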